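/- arXiv:2008.12323 — 3 statements merged into one kernel-verified Lean document; each statement's English description precedes it below -/
import Mathlib

section
/- For a positive semidefinite Hermitian Toeplitz matrix T of size n×n with rank r < n, there exist r distinct frequencies f_1,...,f_r in [0,1) and positive reals p_1,...,p_r such that T equals the sum over k of p_k · v(f_k) v(f_k)*, where v(f) is the vector with entries e^{2πi j f} for j = 0,...,n-1 (the Carathéodory–Fejér / Vandermonde decomposition). -/
open Complex
open scoped ComplexOrder

noncomputable def vand (n : ℕ) (f : ℝ) : Fin n → ℂ :=
  fun j => Complex.exp (2 * Real.pi * Complex.I * (j.val : ℂ) * (f : ℂ))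

/-!
Identify `x ∈ ℂⁿ` with the polynomial `∑ xⱼ Xʲ` of degree `< n`, so that `T` becomes a
Hermitian form `⟪u, v⟫ = x(u)* T x(v)` (`polyForm T`) on such polynomials. The Toeplitz
property says `⟪X u, X v⟫ = ⟪u, v⟫` whenever `deg u, deg v < n - 1`, and positivity says
`⟪u, u⟫ = 0` only on the kernel. Hence the kernel is stable under multiplication by `X` and
consists of the multiples of its monic element `p` of least degree, and counting dimensions
gives `deg p = rank T`. Shift invariance then forces the roots of `p` to be simple and of
modulus one, and makes the Lagrange basis on these roots orthogonal, so that
`⟪u, v⟫ = ∑_w ρ_w conj (u w) v w` with `ρ_w > 0`. Taking `u = Xⁱ`, `v = Xʲ` gives the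
decomposition.
-/

open Polynomial Matrix ComplexConjugate

theorem Matrix.rank_add_finrank_ker_mulVecLin {m ι K : Type*} [Fintype ι] [Field K]
    (A : Matrix m ι K) :
    A.rank + Module.finrank K (LinearMap.ker A.mulVecLin) = Fintype.card ι := by
  rw [Matrix.rank, LinearMap.finrank_range_add_finrank_ker, Module.finrank_fintype_fun_eq_card]

theorem Polynomial.Monic.degree_mul_lt_iff {R : Type*} [CommSemiring R] {p : R[X]}
    (hp : p.Monic) {m : ℕ} (hm : p.natDegree ≤ m) (g : R[X]) :
    (p * g).degree < m ↔ g.degree < ↑(m - p.natDegree) := by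
  nontriviality R
  rw [mul_comm, hp.degree_mul, degree_eq_natDegree hp.ne_zero]
  rcases eq_or_ne g 0 with rfl | hg
  · simp
  rw [degree_eq_natDegree hg, ← Nat.cast_add, Nat.cast_lt, Nat.cast_lt]
  omega

theorem Polynomial.degree_lt_of_eq_X_sub_C_mul {R : Type*} [CommRing R] [IsDomain R]
    {p s : R[X]} {w : R} (hp : p ≠ 0) (h : p = (X - C w) * s) : s.degree < p.degree := by
  have hs : s ≠ 0 := by rintro rfl; simp_all
  refine degree_lt_degree ?_
  rw [h, natDegree_mul (X_sub_C_ne_zero w) hs, natDegree_X_sub_C]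
  omega

theorem Lagrange.X_sub_C_mul_basis {F ι : Type*} [Field F] [DecidableEq ι] {s : Finset ι}
    {v : ι → F} {i : ι} (hi : i ∈ s) :
    (X - C (v i)) * Lagrange.basis s v i = C (Lagrange.nodalWeight s v i) * Lagrange.nodal s v := by
  rw [Lagrange.basis_eq_prod_sub_inv_mul_nodal_div hi, ← Lagrange.nodal_erase_eq_nodal_div hi,
    Lagrange.nodal_eq_mul_nodal_erase hi]
  ring

namespace CaratheodoryFejer

variable {n : ℕ}

/-- Coefficients of index `≥ n` are discarded. -/
noncomputable def coeffVec (n : ℕ) : ℂ[X] →ₗ[ℂ] Fin n → ℂ := LinearMap.pi fun j => lcoeff ℂ j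

@[simp]
lemma coeffVec_apply (u : ℂ[X]) (j : Fin n) : coeffVec n u j = u.coeff j := rfl

lemma eq_zero_of_coeffVec_eq_zero {u : ℂ[X]} (hu : u ∈ degreeLT ℂ n) (h : coeffVec n u = 0) :
    u = 0 := by
  rwa [show coeffVec n u = degreeLTEquiv ℂ n ⟨u, hu⟩ from rfl,
    degreeLTEquiv_eq_zero_iff_eq_zero] at h

lemma exists_coeffVec_eq (x : Fin n → ℂ) : ∃ u ∈ degreeLT ℂ n, coeffVec n u = x :=
  ⟨_, ((degreeLTEquiv ℂ n).symm x).2, (degreeLTEquiv ℂ n).apply_symm_apply x⟩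

variable (T : Matrix (Fin n) (Fin n) ℂ)

noncomputable def polyForm : ℂ[X] →ₗ⋆[ℂ] ℂ[X] →ₗ[ℂ] ℂ :=
  LinearMap.mk₂'ₛₗ (starRingEnd ℂ) (RingHom.id ℂ)
    (fun u v => star (coeffVec n u) ⬝ᵥ (T *ᵥ coeffVec n v))
    (by simp [add_dotProduct]) (by simp [smul_dotProduct]) (by simp [mulVec_add])
    (by simp [mulVec_smul])

lemma polyForm_apply (u v : ℂ[X]) :
    polyForm T u v = star (coeffVec n u) ⬝ᵥ (T *ᵥ coeffVec n v) := rfl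

lemma polyForm_X_pow_X_pow (i j : Fin n) : polyForm T (X ^ (i : ℕ)) (X ^ (j : ℕ)) = T i j := by
  simp [polyForm_apply, dotProduct, mulVec, coeff_X_pow, Fin.val_eq_val]

noncomputable def kerPoly : Submodule ℂ ℂ[X] := LinearMap.ker (T.mulVecLin ∘ₗ coeffVec n)

def IsToeplitz : Prop :=
  ∀ j k j' k' : Fin n, (j : ℤ) - k = (j' : ℤ) - k' → T j k = T j' k'

variable {T}

lemma mem_kerPoly {u : ℂ[X]} : u ∈ kerPoly T ↔ T *ᵥ coeffVec n u = 0 := Iff.rfl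

lemma polyForm_eq_zero_of_mem_kerPoly_right {u v : ℂ[X]} (hv : v ∈ kerPoly T) :
    polyForm T u v = 0 := by
  rw [polyForm_apply, mem_kerPoly.1 hv, dotProduct_zero]

lemma polyForm_eq_zero_of_mem_kerPoly_left (hherm : T.IsHermitian) {u v : ℂ[X]}
    (hu : u ∈ kerPoly T) : polyForm T u v = 0 := by
  rw [polyForm_apply, dotProduct_mulVec, ← hherm.eq, ← star_mulVec,
    mem_kerPoly.1 hu, star_zero, zero_dotProduct]

lemma polyForm_add_left_of_mem_kerPoly (hherm : T.IsHermitian) {k : ℂ[X]}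
    (hk : k ∈ kerPoly T) (u v : ℂ[X]) : polyForm T (u + k) v = polyForm T u v := by
  rw [map_add, LinearMap.add_apply, polyForm_eq_zero_of_mem_kerPoly_left hherm hk, add_zero]

lemma polyForm_add_right_of_mem_kerPoly {k : ℂ[X]} (hk : k ∈ kerPoly T) (u v : ℂ[X]) :
    polyForm T u (v + k) = polyForm T u v := by
  rw [map_add, polyForm_eq_zero_of_mem_kerPoly_right hk, add_zero]

lemma mem_kerPoly_of_polyForm_self_eq_zero (hpsd : T.PosSemidef) {u : ℂ[X]}
    (hu : polyForm T u u = 0) : u ∈ kerPoly T :=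
  (hpsd.dotProduct_mulVec_zero_iff _).1 hu

lemma polyForm_self_nonneg (hpsd : T.PosSemidef) (u : ℂ[X]) : 0 ≤ polyForm T u u :=
  hpsd.dotProduct_mulVec_nonneg _

lemma polyForm_eq_sum_coeff (u v : ℂ[X]) :
    polyForm T u v = ∑ i : Fin n, ∑ j : Fin n, conj (u.coeff i) * T i j * v.coeff j := by
  simp [polyForm_apply, dotProduct, mulVec, Finset.mul_sum, mul_assoc]

lemma IsToeplitz.polyForm_X_mul_X_mul (htoep : IsToeplitz T) {u v : ℂ[X]}
    (hu : u.degree < ↑(n - 1)) (hv : v.degree < ↑(n - 1)) :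
    polyForm T (X * u) (X * v) = polyForm T u v := by
  obtain _ | N := n
  · simp [polyForm_apply]
  simp only [Nat.add_sub_cancel] at hu hv
  have hshift : polyForm T (X * u) (X * v) =
      ∑ i : Fin N, ∑ j : Fin N, conj (u.coeff i) * T i.succ j.succ * v.coeff j := by
    simp [polyForm_eq_sum_coeff, Fin.sum_univ_succ (n := N)]
  have hlast : polyForm T u v =
      ∑ i : Fin N, ∑ j : Fin N, conj (u.coeff i) * T i.castSucc j.castSucc * v.coeff j := by
    simp [polyForm_eq_sum_coeff, Fin.sum_univ_castSucc (n := N), coeff_eq_zero_of_degree_lt hu,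
      coeff_eq_zero_of_degree_lt hv]
  rw [hshift, hlast]
  refine Finset.sum_congr rfl fun i _ => Finset.sum_congr rfl fun j _ => ?_
  rw [htoep _ _ i.castSucc j.castSucc (by simp)]

lemma IsToeplitz.X_mul_mem_kerPoly (htoep : IsToeplitz T) (hpsd : T.PosSemidef) {u : ℂ[X]}
    (hu : u ∈ kerPoly T) (hdeg : u.degree < ↑(n - 1)) : X * u ∈ kerPoly T :=
  mem_kerPoly_of_polyForm_self_eq_zero hpsd <| by
    rw [htoep.polyForm_X_mul_X_mul hdeg hdeg, polyForm_eq_zero_of_mem_kerPoly_right hu]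

lemma IsToeplitz.X_pow_mul_mem_kerPoly (htoep : IsToeplitz T) (hpsd : T.PosSemidef) {u : ℂ[X]}
    (hu : u ∈ kerPoly T) {k : ℕ} (hdeg : k + u.natDegree < n) : X ^ k * u ∈ kerPoly T := by
  induction k with
  | zero => simpa using hu
  | succ k ih =>
    rw [pow_succ', mul_assoc]
    refine htoep.X_mul_mem_kerPoly hpsd (ih (by omega)) (degree_le_natDegree.trans_lt ?_)
    have hle : (X ^ k * u).natDegree ≤ k + u.natDegree :=
      natDegree_mul_le.trans (Nat.add_le_add_right (natDegree_X_pow_le k) _)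
    exact_mod_cast hle.trans_lt (by omega)

lemma IsToeplitz.mul_mem_kerPoly (htoep : IsToeplitz T) (hpsd : T.PosSemidef) {u : ℂ[X]}
    (hu : u ∈ kerPoly T) {g : ℂ[X]} (hdeg : (u * g).degree < n) : u * g ∈ kerPoly T := by
  rcases eq_or_ne u 0 with rfl | hu0
  · simp
  rcases eq_or_ne g 0 with rfl | hg0
  · simp
  rw [← natDegree_lt_iff_degree_lt (mul_ne_zero hu0 hg0), natDegree_mul hu0 hg0] at hdeg
  rw [g.as_sum_range_C_mul_X_pow, Finset.mul_sum]
  refine Submodule.sum_mem _ fun k hk => ?_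
  rw [show u * (C (g.coeff k) * X ^ k) = g.coeff k • (X ^ k * u) by rw [smul_eq_C_mul]; ring]
  exact Submodule.smul_mem _ _ <|
    htoep.X_pow_mul_mem_kerPoly hpsd hu (by rw [Finset.mem_range] at hk; omega)

structure IsMinimalKernelPoly (T : Matrix (Fin n) (Fin n) ℂ) (p : ℂ[X]) : Prop where
  monic : p.Monic
  natDegree_lt : p.natDegree < n
  mem_kerPoly : p ∈ kerPoly T
  eq_zero_of_degree_lt : ∀ u ∈ kerPoly T, u.degree < p.degree → u = 0

lemma exists_mem_kerPoly_ne_zero (h : T.rank < n) :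
    ∃ u ∈ kerPoly T, u ≠ 0 ∧ u.degree < n := by
  have hker : LinearMap.ker T.mulVecLin ≠ ⊥ := by
    intro hbot
    have := T.rank_add_finrank_ker_mulVecLin
    rw [hbot, finrank_bot, Fintype.card_fin] at this
    omega
  obtain ⟨x, hx, hx0⟩ := Submodule.exists_mem_ne_zero_of_ne_bot hker
  obtain ⟨u, hudeg, rfl⟩ := exists_coeffVec_eq x
  exact ⟨u, hx, by rintro rfl; simp at hx0, mem_degreeLT.1 hudeg⟩

lemma exists_isMinimalKernelPoly (h : T.rank < n) : ∃ p, IsMinimalKernelPoly T p := by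
  classical
  obtain ⟨u, hu, hu0, hdeg⟩ := exists_mem_kerPoly_ne_zero h
  have hex : ∃ d, ∃ q ∈ kerPoly T, q ≠ 0 ∧ q.natDegree = d := ⟨_, u, hu, hu0, rfl⟩
  obtain ⟨q, hq, hq0, hqd⟩ := Nat.find_spec hex
  have hlc : q.leadingCoeff⁻¹ ≠ 0 := inv_ne_zero (leadingCoeff_ne_zero.2 hq0)
  have hpdeg : (q * C q.leadingCoeff⁻¹).natDegree = Nat.find hex := by
    rw [natDegree_mul_C hlc, hqd]
  refine ⟨q * C q.leadingCoeff⁻¹, monic_mul_leadingCoeff_inv hq0, ?_, ?_, ?_⟩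
  · rw [← natDegree_lt_iff_degree_lt hu0] at hdeg
    exact hpdeg ▸ (Nat.find_min' hex ⟨u, hu, hu0, rfl⟩).trans_lt hdeg
  · rw [mul_comm, ← smul_eq_C_mul]
    exact Submodule.smul_mem _ _ hq
  · intro v hv hvdeg
    by_contra hv0
    rw [degree_eq_natDegree hv0, degree_eq_natDegree (monic_mul_leadingCoeff_inv hq0).ne_zero,
      hpdeg, Nat.cast_lt] at hvdeg
    exact Nat.find_min hex hvdeg ⟨v, hv, hv0, rfl⟩

noncomputable def rootBasis (p : ℂ[X]) (w : ℂ) : ℂ[X] := Lagrange.basis p.roots.toFinset id w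

namespace IsMinimalKernelPoly

variable {p : ℂ[X]}

lemma degree_eq (hp : IsMinimalKernelPoly T p) : p.degree = p.natDegree :=
  degree_eq_natDegree hp.monic.ne_zero

lemma degree_lt (hp : IsMinimalKernelPoly T p) : p.degree < n :=
  hp.degree_eq ▸ Nat.cast_lt.2 hp.natDegree_lt

lemma degree_lt_pred (hp : IsMinimalKernelPoly T p) {u : ℂ[X]} (hu : u.degree < p.degree) :
    u.degree < ↑(n - 1) := by
  rcases eq_or_ne u 0 with rfl | hu0
  · simp
  rw [hp.degree_eq, degree_eq_natDegree hu0, Nat.cast_lt] at hu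
  rw [degree_eq_natDegree hu0, Nat.cast_lt]
  have := hp.natDegree_lt
  omega

lemma mul_divByMonic_mem_kerPoly (hp : IsMinimalKernelPoly T p) (hpsd : T.PosSemidef)
    (htoep : IsToeplitz T) {u : ℂ[X]} (hu : u.degree < n) : p * (u /ₘ p) ∈ kerPoly T := by
  refine htoep.mul_mem_kerPoly hpsd hp.mem_kerPoly ?_
  rw [eq_sub_of_add_eq' (modByMonic_add_div u p)]
  exact (degree_sub_le _ _).trans_lt
    (max_lt hu ((degree_modByMonic_lt u hp.monic).trans hp.degree_lt))

lemma dvd_of_mem_kerPoly (hp : IsMinimalKernelPoly T p) (hpsd : T.PosSemidef)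
    (htoep : IsToeplitz T) {u : ℂ[X]} (hu : u ∈ kerPoly T) (hdeg : u.degree < n) : p ∣ u := by
  rw [← modByMonic_eq_zero_iff_dvd hp.monic]
  refine hp.eq_zero_of_degree_lt _ ?_ (degree_modByMonic_lt u hp.monic)
  rw [modByMonic_eq_sub_mul_div u p]
  exact sub_mem hu (hp.mul_divByMonic_mem_kerPoly hpsd htoep hdeg)

lemma finrank_ker_mulVecLin (hp : IsMinimalKernelPoly T p) (hpsd : T.PosSemidef)
    (htoep : IsToeplitz T) :
    Module.finrank ℂ (LinearMap.ker T.mulVecLin) = n - p.natDegree := by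
  have hmul := hp.monic.degree_mul_lt_iff hp.natDegree_lt.le
  let φ := coeffVec n ∘ₗ LinearMap.mulLeft ℂ p ∘ₗ (degreeLT ℂ (n - p.natDegree)).subtype
  have hinj : Function.Injective φ := by
    rw [← LinearMap.ker_eq_bot, LinearMap.ker_eq_bot']
    rintro ⟨g, hg⟩ h
    have := eq_zero_of_coeffVec_eq_zero (mem_degreeLT.2 ((hmul g).2 (mem_degreeLT.1 hg))) h
    simpa [hp.monic.ne_zero] using this
  have hrange : LinearMap.range φ = LinearMap.ker T.mulVecLin := by
    ext x
    constructor
    · rintro ⟨⟨g, hg⟩, rfl⟩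
      exact htoep.mul_mem_kerPoly hpsd hp.mem_kerPoly ((hmul g).2 (mem_degreeLT.1 hg))
    · intro hx
      obtain ⟨u, hudeg, rfl⟩ := exists_coeffVec_eq x
      obtain ⟨g, rfl⟩ := hp.dvd_of_mem_kerPoly hpsd htoep hx (mem_degreeLT.1 hudeg)
      exact ⟨⟨g, mem_degreeLT.2 ((hmul g).1 (mem_degreeLT.1 hudeg))⟩, rfl⟩
  rw [← hrange, LinearMap.finrank_range_of_inj hinj, (degreeLTEquiv ℂ _).finrank_eq,
    Module.finrank_fin_fun]

lemma natDegree_eq_rank (hp : IsMinimalKernelPoly T p) (hpsd : T.PosSemidef)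
    (htoep : IsToeplitz T) : p.natDegree = T.rank := by
  have := T.rank_add_finrank_ker_mulVecLin
  rw [hp.finrank_ker_mulVecLin hpsd htoep, Fintype.card_fin] at this
  have := hp.natDegree_lt
  omega

lemma polyForm_modByMonic (hp : IsMinimalKernelPoly T p) (hpsd : T.PosSemidef)
    (htoep : IsToeplitz T) {u v : ℂ[X]} (hu : u.degree < n) (hv : v.degree < n) :
    polyForm T u v = polyForm T (u %ₘ p) (v %ₘ p) := by
  conv_lhs => rw [← modByMonic_add_div u p, ← modByMonic_add_div v p]
  rw [polyForm_add_left_of_mem_kerPoly hpsd.1 (hp.mul_divByMonic_mem_kerPoly hpsd htoep hu),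
    polyForm_add_right_of_mem_kerPoly (hp.mul_divByMonic_mem_kerPoly hpsd htoep hv)]

lemma eq_zero_of_polyForm_self_eq_zero (hp : IsMinimalKernelPoly T p) (hpsd : T.PosSemidef)
    {u : ℂ[X]} (hu : u.degree < p.degree) (h : polyForm T u u = 0) : u = 0 :=
  hp.eq_zero_of_degree_lt u (mem_kerPoly_of_polyForm_self_eq_zero hpsd h) hu

lemma polyForm_X_mul_X_mul (hp : IsMinimalKernelPoly T p) (htoep : IsToeplitz T) {u v : ℂ[X]}
    (hu : u.degree < p.degree) (hv : v.degree < p.degree) :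
    polyForm T (X * u) (X * v) = polyForm T u v :=
  htoep.polyForm_X_mul_X_mul (hp.degree_lt_pred hu) (hp.degree_lt_pred hv)

lemma polyForm_eq_of_X_mul_eq (hp : IsMinimalKernelPoly T p) (hpsd : T.PosSemidef)
    (htoep : IsToeplitz T) {a b k l : ℂ[X]} {α β : ℂ} (ha : a.degree < p.degree)
    (hb : b.degree < p.degree) (hk : k ∈ kerPoly T) (hl : l ∈ kerPoly T)
    (hXa : X * a = α • a + k) (hXb : X * b = β • b + l) :
    polyForm T a b = conj α * β * polyForm T a b := by
  calc polyForm T a b = polyForm T (X * a) (X * b) := (hp.polyForm_X_mul_X_mul htoep ha hb).symm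
    _ = conj α * β * polyForm T a b := by
      rw [hXa, hXb, polyForm_add_left_of_mem_kerPoly hpsd.1 hk,
        polyForm_add_right_of_mem_kerPoly hl]
      simp only [map_smulₛₗ, LinearMap.smul_apply, RingHom.id_apply, smul_eq_mul]
      ring

lemma conj_mul_self_eq_one (hp : IsMinimalKernelPoly T p) (hpsd : T.PosSemidef)
    (htoep : IsToeplitz T) {w : ℂ} (hw : p.IsRoot w) : conj w * w = 1 := by
  obtain ⟨s, hs⟩ := dvd_iff_isRoot.2 hw
  have hs0 : s ≠ 0 := by rintro rfl; exact hp.monic.ne_zero (by simpa using hs)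
  have hsdeg := degree_lt_of_eq_X_sub_C_mul hp.monic.ne_zero hs
  have hXs : X * s = w • s + p := by rw [hs, smul_eq_C_mul]; ring
  have key := hp.polyForm_eq_of_X_mul_eq hpsd htoep hsdeg hsdeg hp.mem_kerPoly hp.mem_kerPoly
    hXs hXs
  have hB : polyForm T s s ≠ 0 := fun h => hs0 (hp.eq_zero_of_polyForm_self_eq_zero hpsd hsdeg h)
  exact mul_right_cancel₀ hB (key.symm.trans (one_mul _).symm)

lemma norm_eq_one_of_isRoot (hp : IsMinimalKernelPoly T p) (hpsd : T.PosSemidef)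
    (htoep : IsToeplitz T) {w : ℂ} (hw : p.IsRoot w) : ‖w‖ = 1 := by
  have h := hp.conj_mul_self_eq_one hpsd htoep hw
  rwa [conj_mul', ← ofReal_pow, ofReal_eq_one,
    pow_eq_one_iff_of_nonneg (norm_nonneg w) two_ne_zero] at h

lemma rootMultiplicity_le_one (hp : IsMinimalKernelPoly T p) (hpsd : T.PosSemidef)
    (htoep : IsToeplitz T) (w : ℂ) : p.rootMultiplicity w ≤ 1 := by
  rw [rootMultiplicity_le_iff hp.monic.ne_zero]
  rintro ⟨q, hq⟩
  -- Modulo the kernel `X s ≡ w s` and `X q ≡ w q + s`, so shift invariance forces `⟪s, s⟫ = 0`.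
  set s := (X - C w) * q with hs
  have hps : p = (X - C w) * s := by rw [hq, hs]; ring
  have hs0 : s ≠ 0 := fun h => hp.monic.ne_zero (by rw [hps, h, mul_zero])
  have hsdeg := degree_lt_of_eq_X_sub_C_mul hp.monic.ne_zero hps
  have hqdeg := (degree_lt_of_eq_X_sub_C_mul hs0 hs).trans hsdeg
  have hw : conj w * w = 1 := hp.conj_mul_self_eq_one hpsd htoep (by simp [hps])
  have hXs : X * s = w • s + p := by rw [hps, smul_eq_C_mul]; ring
  have hXq : X * q = w • q + s := by rw [hs, smul_eq_C_mul]; ring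
  have key : polyForm T s q = polyForm T s q + conj w * polyForm T s s := by
    calc polyForm T s q = polyForm T (X * s) (X * q) :=
          (hp.polyForm_X_mul_X_mul htoep hsdeg hqdeg).symm
      _ = polyForm T s q + conj w * polyForm T s s := by
        rw [hXs, hXq, polyForm_add_left_of_mem_kerPoly hpsd.1 hp.mem_kerPoly]
        simp only [map_add, map_smulₛₗ, LinearMap.smul_apply, RingHom.id_apply, smul_eq_mul]
        linear_combination polyForm T s q * hw
  have hss : conj w * polyForm T s s = 0 := by linear_combination -key
  have hw0 : conj w ≠ 0 := left_ne_zero_of_mul_eq_one hw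
  exact hs0 (hp.eq_zero_of_polyForm_self_eq_zero hpsd hsdeg ((mul_eq_zero.1 hss).resolve_left hw0))

lemma nodup_roots (hp : IsMinimalKernelPoly T p) (hpsd : T.PosSemidef) (htoep : IsToeplitz T) :
    p.roots.Nodup := by
  classical
  refine Multiset.nodup_iff_count_le_one.2 fun w => ?_
  rw [count_roots]
  exact hp.rootMultiplicity_le_one hpsd htoep w

lemma card_roots_toFinset (hp : IsMinimalKernelPoly T p) (hpsd : T.PosSemidef)
    (htoep : IsToeplitz T) : p.roots.toFinset.card = p.natDegree := by
  rw [Multiset.toFinset_card_of_nodup (hp.nodup_roots hpsd htoep),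
    IsAlgClosed.card_roots_eq_natDegree]

lemma nodal_roots_toFinset (hp : IsMinimalKernelPoly T p) (hpsd : T.PosSemidef)
    (htoep : IsToeplitz T) : Lagrange.nodal p.roots.toFinset id = p := by
  rw [Lagrange.nodal, Finset.prod_eq_multiset_prod, Multiset.toFinset_val,
    (hp.nodup_roots hpsd htoep).dedup]
  exact prod_multiset_X_sub_C_of_monic_of_roots_card_eq hp.monic
    IsAlgClosed.card_roots_eq_natDegree

lemma degree_rootBasis_lt (hp : IsMinimalKernelPoly T p) (hpsd : T.PosSemidef)
    (htoep : IsToeplitz T) {w : ℂ} (hw : w ∈ p.roots.toFinset) :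
    (rootBasis p w).degree < p.degree := by
  have hcard := hp.card_roots_toFinset hpsd htoep
  have hpos := Finset.card_pos.2 ⟨w, hw⟩
  rw [rootBasis, Lagrange.degree_basis (Set.injOn_id _) hw, hp.degree_eq, Nat.cast_lt]
  omega

lemma X_mul_rootBasis (hp : IsMinimalKernelPoly T p) (hpsd : T.PosSemidef)
    (htoep : IsToeplitz T) {w : ℂ} (hw : w ∈ p.roots.toFinset) :
    X * rootBasis p w = w • rootBasis p w + Lagrange.nodalWeight p.roots.toFinset id w • p := by
  have h := Lagrange.X_sub_C_mul_basis (v := id) hw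
  rw [hp.nodal_roots_toFinset hpsd htoep, id] at h
  rw [rootBasis, smul_eq_C_mul, smul_eq_C_mul]
  linear_combination h

lemma polyForm_rootBasis_of_ne (hp : IsMinimalKernelPoly T p) (hpsd : T.PosSemidef)
    (htoep : IsToeplitz T) {w w' : ℂ} (hw : w ∈ p.roots.toFinset) (hw' : w' ∈ p.roots.toFinset)
    (hne : w ≠ w') : polyForm T (rootBasis p w) (rootBasis p w') = 0 := by
  have hker := fun c : ℂ => Submodule.smul_mem _ c hp.mem_kerPoly
  have key := hp.polyForm_eq_of_X_mul_eq hpsd htoep (hp.degree_rootBasis_lt hpsd htoep hw)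
    (hp.degree_rootBasis_lt hpsd htoep hw') (hker _) (hker _) (hp.X_mul_rootBasis hpsd htoep hw)
    (hp.X_mul_rootBasis hpsd htoep hw')
  have hcirc : conj w * w = 1 :=
    hp.conj_mul_self_eq_one hpsd htoep (isRoot_of_mem_roots (Multiset.mem_toFinset.1 hw))
  have hne' : conj w * w' - 1 ≠ 0 := fun h =>
    hne (mul_left_cancel₀ (left_ne_zero_of_mul_eq_one hcirc) (by linear_combination hcirc - h))
  exact (mul_eq_zero.1 (by linear_combination -key)).resolve_left hne'

lemma polyForm_rootBasis_self_pos (hp : IsMinimalKernelPoly T p) (hpsd : T.PosSemidef)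
    (htoep : IsToeplitz T) {w : ℂ} (hw : w ∈ p.roots.toFinset) :
    0 < polyForm T (rootBasis p w) (rootBasis p w) :=
  (polyForm_self_nonneg hpsd _).lt_of_ne fun h =>
    Lagrange.basis_ne_zero (Set.injOn_id _) hw <|
      hp.eq_zero_of_polyForm_self_eq_zero hpsd (hp.degree_rootBasis_lt hpsd htoep hw) h.symm

lemma eq_sum_smul_rootBasis (hp : IsMinimalKernelPoly T p) (hpsd : T.PosSemidef)
    (htoep : IsToeplitz T) {u : ℂ[X]} (hu : u.degree < p.degree) :
    u = ∑ w ∈ p.roots.toFinset, u.eval w • rootBasis p w := by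
  rw [hp.degree_eq, ← hp.card_roots_toFinset hpsd htoep] at hu
  conv_lhs => rw [Lagrange.eq_interpolate (Set.injOn_id _) hu]
  simp [Lagrange.interpolate_apply, smul_eq_C_mul, rootBasis]

lemma polyForm_eq_sum_of_degree_lt (hp : IsMinimalKernelPoly T p) (hpsd : T.PosSemidef)
    (htoep : IsToeplitz T) {u v : ℂ[X]} (hu : u.degree < p.degree) (hv : v.degree < p.degree) :
    polyForm T u v = ∑ w ∈ p.roots.toFinset,
      conj (u.eval w) * v.eval w * polyForm T (rootBasis p w) (rootBasis p w) := by
  conv_lhs => rw [hp.eq_sum_smul_rootBasis hpsd htoep hu, hp.eq_sum_smul_rootBasis hpsd htoep hv]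
  simp only [map_sum, LinearMap.sum_apply, map_smulₛₗ, LinearMap.smul_apply, RingHom.id_apply,
    smul_eq_mul]
  refine Finset.sum_congr rfl fun w hw => ?_
  rw [Finset.sum_eq_single w (fun x hx hne => by
    rw [hp.polyForm_rootBasis_of_ne hpsd htoep hx hw hne, mul_zero]) (absurd hw)]
  ring

lemma polyForm_eq_sum (hp : IsMinimalKernelPoly T p) (hpsd : T.PosSemidef)
    (htoep : IsToeplitz T) {u v : ℂ[X]} (hu : u.degree < n) (hv : v.degree < n) :
    polyForm T u v = ∑ w ∈ p.roots.toFinset,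
      conj (u.eval w) * v.eval w * polyForm T (rootBasis p w) (rootBasis p w) := by
  rw [hp.polyForm_modByMonic hpsd htoep hu hv, hp.polyForm_eq_sum_of_degree_lt hpsd htoep
    (degree_modByMonic_lt u hp.monic) (degree_modByMonic_lt v hp.monic)]
  refine Finset.sum_congr rfl fun w hw => ?_
  have hroot := isRoot_of_mem_roots (Multiset.mem_toFinset.1 hw)
  simp [modByMonic_eq_sub_mul_div _ p, hroot.eq_zero]

end IsMinimalKernelPoly

noncomputable def freq (z : ℂ) : ℝ := Int.fract (z.arg / (2 * Real.pi))

lemma freq_mem_Ico (z : ℂ) : freq z ∈ Set.Ico (0 : ℝ) 1 :=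
  ⟨Int.fract_nonneg _, Int.fract_lt_one _⟩

lemma exp_two_pi_I_freq {z : ℂ} (hz : ‖z‖ = 1) : exp (2 * Real.pi * I * freq z) = z := by
  have h : 2 * Real.pi * I * (freq z : ℂ) =
      z.arg * I - (⌊z.arg / (2 * Real.pi)⌋ : ℤ) * (2 * Real.pi * I) := by
    rw [freq, Int.fract]
    push_cast
    field_simp
  rw [h, exp_sub, exp_int_mul_two_pi_mul_I, div_one]
  simpa [hz] using norm_mul_exp_arg_mul_I z

lemma freq_injOn : Set.InjOn freq {z : ℂ | ‖z‖ = 1} := fun z hz z' hz' h => by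
  rw [← exp_two_pi_I_freq hz, h, exp_two_pi_I_freq hz']

lemma vand_freq {z : ℂ} (hz : ‖z‖ = 1) (j : Fin n) : vand n (freq z) j = z ^ (j : ℕ) := by
  conv_rhs => rw [← exp_two_pi_I_freq hz, ← exp_nat_mul]
  rw [vand]
  ring_nf

end CaratheodoryFejer

open CaratheodoryFejer

/-- Carathéodory–Fejér / Vandermonde decomposition of a PSD Hermitian Toeplitz matrix of
rank `r < n`. -/
theorem caratheodory_fejer_vandermonde (n r : ℕ)
    (T : Matrix (Fin n) (Fin n) ℂ)
    (hpsd : T.PosSemidef)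
    (htoep : ∀ j k j' k' : Fin n,
      ((j.val : ℤ) - (k.val : ℤ) = (j'.val : ℤ) - (k'.val : ℤ)) → T j k = T j' k')
    (hrank : T.rank = r) (hrn : r < n) :
    ∃ (f : Fin r → ℝ) (p : Fin r → ℝ),
      Function.Injective f ∧
      (∀ k, f k ∈ Set.Ico (0 : ℝ) 1) ∧
      (∀ k, 0 < p k) ∧
      (∀ i j : Fin n,
        T i j = ∑ k, (p k : ℂ) * vand n (f k) i * (starRingEnd ℂ) (vand n (f k) j)) := by
  obtain ⟨p, hp⟩ := exists_isMinimalKernelPoly (hrank ▸ hrn)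
  have hcard : p.roots.toFinset.card = r := by
    rw [hp.card_roots_toFinset hpsd htoep, hp.natDegree_eq_rank hpsd htoep, hrank]
  let e : Fin r ≃ p.roots.toFinset := (p.roots.toFinset.equivFinOfCardEq hcard).symm
  -- The nodes are the conjugates of the roots, as `polyForm` is conjugate-linear on the left.
  let z : Fin r → ℂ := fun k => conj (e k : ℂ)
  let ρ : Fin r → ℂ := fun k => polyForm T (rootBasis p (e k)) (rootBasis p (e k))
  have hz (k : Fin r) : ‖z k‖ = 1 := by
    simpa [z] using hp.norm_eq_one_of_isRoot hpsd htoep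
      (isRoot_of_mem_roots (Multiset.mem_toFinset.1 (e k).2))
  have hρ (k : Fin r) : 0 < ρ k := hp.polyForm_rootBasis_self_pos hpsd htoep (e k).2
  refine ⟨fun k => freq (z k), fun k => (ρ k).re, fun a b h => ?_, fun k => freq_mem_Ico _,
    fun k => (pos_iff.1 (hρ k)).1, fun i j => ?_⟩
  · exact e.injective (Subtype.ext (star_injective (freq_injOn (hz a) (hz b) h)))
  rw [← polyForm_X_pow_X_pow T i j, hp.polyForm_eq_sum hpsd htoep (by simp) (by simp),
    ← Finset.sum_coe_sort, ← e.sum_comp]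
  refine Fintype.sum_congr _ _ fun k => ?_
  rw [← eq_re_of_ofReal_le (r := 0) (by simpa using (hρ k).le)]
  simp only [vand_freq (hz k), z, ρ, eval_pow, eval_X, map_pow, conj_conj]
  ring
end

section
/- The Vandermonde decomposition of a positive semidefinite Toeplitz matrix of rank r < n is unique: if T = Σ_{k=1}^r p_k v(f_k) v(f_k)* = Σ_{k=1}^r q_k v(g_k) v(g_k)* with distinct f_k's, distinct g_k's, and all p_k, q_k > 0, then the multisets {(f_k, p_k)} and {(g_k, q_k)} coincide. -/
open Complex
open scoped ComplexOrder

/-!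
Put `z_k = e^{2πi f_k}` and `w_k = e^{2πi g_k}`. Both decompositions say that the entry
`T_{ij}` is the power sum `∑ p_k z_k^{i-j} = ∑ q_k w_k^{i-j}`, so the two discrete measures
`∑ p_k δ_{z_k}` and `∑ q_k δ_{w_k}` have the same moments of every order `m` with `|m| < n`.
As no atom sits at `0`, these moments integrate every `x^{-(n-1)} P(x)` with `deg P ≤ 2n - 2`.
The two supports together have at most `2r ≤ 2n - 2` points, so `P` can be taken to be the
Lagrange basis polynomial of any single point; it picks out the mass of that point in each
measure, and the masses coincide.
-/

open Polynomial Finset Function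

section PowerSums

variable {K ι κ : Type*} [Field K] [Fintype ι] [Fintype κ]

lemma sum_mul_zpow_mul_eval (p z : ι → K) (hz : ∀ i, z i ≠ 0) (N : ℤ) (P : K[X]) :
    ∑ i, p i * z i ^ (-N) * P.eval (z i) =
      ∑ d ∈ range (P.natDegree + 1), P.coeff d * ∑ i, p i * z i ^ ((d : ℤ) - N) := by
  simp_rw [eval_eq_sum_range, Finset.mul_sum]
  rw [Finset.sum_comm]
  refine sum_congr rfl fun d _ => sum_congr rfl fun i _ => ?_
  rw [sub_eq_neg_add, zpow_add₀ (hz i), zpow_natCast]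
  ring

lemma sum_mul_zpow_mul_eval_eq_of_zpow_moments_eq {N : ℕ} {p z : ι → K} {q w : κ → K}
    (hz : ∀ i, z i ≠ 0) (hw : ∀ j, w j ≠ 0)
    (hmom : ∀ m : ℤ, |m| ≤ N → ∑ i, p i * z i ^ m = ∑ j, q j * w j ^ m)
    (P : K[X]) (hP : P.natDegree ≤ 2 * N) :
    ∑ i, p i * z i ^ (-(N : ℤ)) * P.eval (z i) = ∑ j, q j * w j ^ (-(N : ℤ)) * P.eval (w j) := by
  rw [sum_mul_zpow_mul_eval p z hz, sum_mul_zpow_mul_eval q w hw]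
  refine sum_congr rfl fun d hd => ?_
  have hd : d ≤ 2 * N := by have := mem_range.mp hd; omega
  rw [hmom _ (abs_le.mpr ⟨by omega, by omega⟩)]

lemma sum_mul_eval_basis [DecidableEq K] {S : Finset K} {a : K} (ha : a ∈ S)
    {z : ι → K} (hzS : ∀ i, z i ∈ S) (c : ι → K) :
    ∑ i, c i * (Lagrange.basis S id a).eval (z i) = ∑ i, if z i = a then c i else 0 := by
  refine sum_congr rfl fun i _ => ?_
  split_ifs with h
  · rw [h, show (Lagrange.basis S id a).eval a = 1 from
      Lagrange.eval_basis_self (Set.injOn_id _) ha, mul_one]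
  · rw [show (Lagrange.basis S id a).eval (z i) = 0 from
      Lagrange.eval_basis_of_ne (v := id) (Ne.symm h) (hzS i), mul_zero]

theorem exists_eq_of_zpow_moments_eq {N : ℕ} {p z : ι → K} {q w : κ → K}
    (hzinj : Injective z) (hwinj : Injective w) (hz : ∀ i, z i ≠ 0) (hw : ∀ j, w j ≠ 0)
    (hp : ∀ i, p i ≠ 0) (hcard : Fintype.card ι + Fintype.card κ ≤ 2 * N + 1)
    (hmom : ∀ m : ℤ, |m| ≤ N → ∑ i, p i * z i ^ m = ∑ j, q j * w j ^ m) (i : ι) :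
    ∃ j, w j = z i ∧ q j = p i := by
  classical
  set S := univ.image z ∪ univ.image w
  have hzS : ∀ i, z i ∈ S := fun i => mem_union_left _ (mem_image_of_mem z (mem_univ i))
  have hwS : ∀ j, w j ∈ S := fun j => mem_union_right _ (mem_image_of_mem w (mem_univ j))
  have hdeg : (Lagrange.basis S id (z i)).natDegree ≤ 2 * N := by
    rw [Lagrange.natDegree_basis (Set.injOn_id _) (hzS i)]
    have hS : #S ≤ Fintype.card ι + Fintype.card κ :=
      (card_union_le _ _).trans (add_le_add card_image_le card_image_le)
    omega
  have h := sum_mul_zpow_mul_eval_eq_of_zpow_moments_eq hz hw hmom _ hdeg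
  rw [sum_mul_eval_basis (hzS i) hzS, sum_mul_eval_basis (hzS i) hwS] at h
  simp only [hzinj.eq_iff, sum_ite_eq', mem_univ, if_true] at h
  by_cases hmem : ∃ j, w j = z i
  · obtain ⟨j, hj⟩ := hmem
    simp only [← hj, hwinj.eq_iff, sum_ite_eq', mem_univ, if_true] at h
    exact ⟨j, hj, mul_right_cancel₀ (zpow_ne_zero _ (hw j)) h.symm⟩
  · push Not at hmem
    simp only [hmem, if_false, sum_const_zero] at h
    exact (mul_ne_zero (hp i) (zpow_ne_zero _ (hz i)) h).elim

end PowerSums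

lemma exists_perm_of_forall_exists_eq {ι α β : Type*} [Finite ι] {f g : ι → α} {p q : ι → β}
    (hf : Injective f) (h : ∀ i, ∃ j, g j = f i ∧ q j = p i) :
    ∃ σ : Equiv.Perm ι, ∀ i, g (σ i) = f i ∧ q (σ i) = p i := by
  choose σ hσ using h
  have hσinj : Injective σ := fun i i' hii' => hf <| by rw [← (hσ i).1, ← (hσ i').1, hii']
  exact ⟨Equiv.ofBijective σ (Finite.injective_iff_bijective.mp hσinj), hσ⟩

lemma injOn_exp_two_pi_mul_I :
    Set.InjOn (fun t : ℝ => cexp (2 * Real.pi * I * t)) (Set.Ico 0 1) := by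
  intro a ha b hb hab
  have hexp : Circle.exp (2 * Real.pi * a) = Circle.exp (2 * Real.pi * b) := by
    ext
    simp only [Circle.coe_exp, ofReal_mul, ofReal_ofNat]
    convert hab using 2 <;> ring
  have hmem : ∀ t ∈ Set.Ico (0 : ℝ) 1, 2 * Real.pi * t ∈ Set.Ico 0 (2 * Real.pi) := fun t ht =>
    ⟨by nlinarith [ht.1, Real.pi_pos], by nlinarith [ht.2, Real.pi_pos]⟩
  have := Circle.exp_injOn_Ico (by simp) (hmem a ha) (hmem b hb) hexp
  exact (mul_right_inj' (by positivity)).mp this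

lemma vand_mul_conj_vand (n : ℕ) (f : ℝ) (i j : Fin n) :
    vand n f i * (starRingEnd ℂ) (vand n f j) = cexp (2 * Real.pi * I * f) ^ ((i : ℤ) - j) := by
  rw [vand, vand, ← exp_conj, ← exp_add, ← exp_int_mul]
  congr 1
  simp only [map_mul, conj_I, conj_ofReal, map_natCast, map_ofNat]
  push_cast
  ring

lemma exists_fin_sub_eq {N : ℕ} {m : ℤ} (hm : |m| ≤ N) : ∃ i j : Fin (N + 1), (i : ℤ) - j = m := by
  obtain ⟨hlo, hhi⟩ := abs_le.mp hm
  rcases le_total 0 m with h | h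
  · exact ⟨⟨m.toNat, by omega⟩, 0, by simp; omega⟩
  · exact ⟨0, ⟨(-m).toNat, by omega⟩, by simp; omega⟩

theorem vandermonde_decomposition_unique_general (n r : ℕ)
    (T : Matrix (Fin n) (Fin n) ℂ)
    (hrn : r < n)
    (f g : Fin r → ℝ) (p q : Fin r → ℝ)
    (hf : ∀ k, f k ∈ Set.Ico (0 : ℝ) 1) (hg : ∀ k, g k ∈ Set.Ico (0 : ℝ) 1)
    (hfinj : Function.Injective f) (hginj : Function.Injective g)
    (hp : ∀ k, 0 < p k)
    (hTf : ∀ i j : Fin n,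
      T i j = ∑ k, (p k : ℂ) * vand n (f k) i * (starRingEnd ℂ) (vand n (f k) j))
    (hTg : ∀ i j : Fin n,
      T i j = ∑ k, (q k : ℂ) * vand n (g k) i * (starRingEnd ℂ) (vand n (g k) j)) :
    ∃ σ : Equiv.Perm (Fin r), ∀ k, g (σ k) = f k ∧ q (σ k) = p k := by
  obtain ⟨N, rfl⟩ : ∃ N, n = N + 1 := ⟨n - 1, by omega⟩
  set u : ℝ → ℂ := fun t => cexp (2 * Real.pi * I * t)
  have hmom : ∀ m : ℤ, |m| ≤ N →
      ∑ k, (p k : ℂ) * u (f k) ^ m = ∑ k, (q k : ℂ) * u (g k) ^ m := by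
    intro m hm
    obtain ⟨i, j, rfl⟩ := exists_fin_sub_eq hm
    have h := (hTf i j).symm.trans (hTg i j)
    simp_rw [mul_assoc _ (vand _ _ _), vand_mul_conj_vand] at h
    exact h
  refine exists_perm_of_forall_exists_eq hfinj fun k => ?_
  have hu {t : Fin r → ℝ} (ht : ∀ k, t k ∈ Set.Ico (0 : ℝ) 1) (hinj : Injective t) :
      Injective (u ∘ t) := fun a b hab => hinj (injOn_exp_two_pi_mul_I (ht a) (ht b) hab)
  obtain ⟨j, hj, hqj⟩ := exists_eq_of_zpow_moments_eq (N := N) (hu hf hfinj) (hu hg hginj)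
    (fun _ => exp_ne_zero _) (fun _ => exp_ne_zero _) (fun k => ofReal_ne_zero.mpr (hp k).ne')
    (by simp only [Fintype.card_fin]; omega) hmom k
  exact ⟨j, injOn_exp_two_pi_mul_I (hg j) (hf k) hj, ofReal_injective hqj⟩

/-- Uniqueness of the Vandermonde decomposition of a PSD Toeplitz matrix of rank . -/
theorem vandermonde_decomposition_unique (n r : ℕ)
    (T : Matrix (Fin n) (Fin n) ℂ)
    (hpsd : T.PosSemidef)
    (htoep : ∀ j k j' k' : Fin n,
      ((j.val : ℤ) - (k.val : ℤ) = (j'.val : ℤ) - (k'.val : ℤ)) → T j k = T j' k')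
    (hrank : T.rank = r) (hrn : r < n)
    (f g : Fin r → ℝ) (p q : Fin r → ℝ)
    (hf : ∀ k, f k ∈ Set.Ico (0 : ℝ) 1) (hg : ∀ k, g k ∈ Set.Ico (0 : ℝ) 1)
    (hfinj : Function.Injective f) (hginj : Function.Injective g)
    (hp : ∀ k, 0 < p k) (hq : ∀ k, 0 < q k)
    (hTf : ∀ i j : Fin n,
      T i j = ∑ k, (p k : ℂ) * vand n (f k) i * (starRingEnd ℂ) (vand n (f k) j))
    (hTg : ∀ i j : Fin n,
      T i j = ∑ k, (q k : ℂ) * vand n (g k) i * (starRingEnd ℂ) (vand n (g k) j)) :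
    ∃ σ : Equiv.Perm (Fin r), ∀ k, g (σ k) = f k ∧ q (σ k) = p k :=
  vandermonde_decomposition_unique_general n r T hrn f g p q hf hg hfinj hginj hp hTf hTg
end

section
/- Let q ≥ 2 and let S ∈ ℂ^{qt×qt} be positive semidefinite block Toeplitz with q×q blocks of size t×t and rank r. Write the Cholesky-type factorization S = CC* with C ∈ ℂ^{qt×r}, and partition C row-wise into q blocks C_0,...,C_{q−1} ∈ ℂ^{t×r}. Then there exists an r×r unitary matrix U such that [C_0; ...; C_{q−2}] U = [C_1; ...; C_{q−1}] (stacking blocks vertically), and the eigenvalues of U are of the form e^{2πi f_j} with f_j ∈ [0,1). -/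
/-!
The rows `x_u` of `C` are vectors in `ℂ^r` whose Gram matrix is `S`. Block Toeplitz structure
says that the rows of block `a` and those of block `a + 1` (for `a < q - 1`) have the same
Gram matrix, so `x_{(a,i)} ↦ x_{(a+1,i)}` extends to a linear isometry of `ℂ^r`, whose matrix
is the unitary `U`. Eigenvalues of a unitary matrix lie on the unit circle, and `f` is the
argument, normalised into `[0, 2π)`, divided by `2π`.
-/

open Matrix
open scoped ComplexOrder

section GramIsometry

variable {ι 𝕜 E : Type*} [Fintype ι] [RCLike 𝕜] [NormedAddCommGroup E] [InnerProductSpace 𝕜 E]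

local notation "⟪" x ", " y "⟫" => inner 𝕜 x y

theorem norm_linearCombination_eq_of_inner_eq {x y : ι → E}
    (h : ∀ i j, ⟪x i, x j⟫ = ⟪y i, y j⟫) (c : ι → 𝕜) :
    ‖Fintype.linearCombination 𝕜 x c‖ = ‖Fintype.linearCombination 𝕜 y c‖ := by
  have hsq : ⟪Fintype.linearCombination 𝕜 x c, Fintype.linearCombination 𝕜 x c⟫
      = ⟪Fintype.linearCombination 𝕜 y c, Fintype.linearCombination 𝕜 y c⟫ := by
    simp only [Fintype.linearCombination_apply, sum_inner, inner_sum, inner_smul_left,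
      inner_smul_right, h]
  rw [inner_self_eq_norm_sq_to_K, inner_self_eq_norm_sq_to_K] at hsq
  exact (pow_left_inj₀ (norm_nonneg _) (norm_nonneg _) two_ne_zero).1 (by exact_mod_cast hsq)

theorem exists_linearIsometry_apply_eq_of_inner_eq [FiniteDimensional 𝕜 E] {x y : ι → E}
    (h : ∀ i j, ⟪x i, x j⟫ = ⟪y i, y j⟫) : ∃ T : E →ₗᵢ[𝕜] E, ∀ i, T (x i) = y i := by
  classical
  set Φ := Fintype.linearCombination 𝕜 x
  set Ψ := Fintype.linearCombination 𝕜 y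
  have hnorm (c : ι → 𝕜) : ‖Ψ c‖ = ‖Φ c‖ := (norm_linearCombination_eq_of_inner_eq h c).symm
  have hΨ {c d : ι → 𝕜} (hcd : Φ c = Φ d) : Ψ c = Ψ d := by
    rw [← sub_eq_zero, ← map_sub, ← norm_eq_zero, hnorm, map_sub, hcd, sub_self, norm_zero]
  -- `Ψ ∘ R` for a linear section `R` of `Φ` is independent of the section, by `hΨ`.
  obtain ⟨R, hR⟩ := Φ.rangeRestrict.exists_rightInverse_of_surjective Φ.range_rangeRestrict
  have hΦR (v : LinearMap.range Φ) : Φ (R v) = v := congrArg Subtype.val (LinearMap.congr_fun hR v)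
  let L : LinearMap.range Φ →ₗᵢ[𝕜] E :=
    { toLinearMap := Ψ ∘ₗ R
      norm_map' := fun v => by simp [hnorm, hΦR] }
  refine ⟨L.extend, fun i => ?_⟩
  have hxi : Φ (Pi.single i 1) = x i := by simp [Φ]
  have hyi : Ψ (Pi.single i 1) = y i := by simp [Ψ]
  rw [← hxi, L.extend_apply ⟨_, LinearMap.mem_range_self Φ _⟩, ← hyi]
  exact hΨ (hΦR _)

end GramIsometry

theorem Matrix.exists_mem_unitaryGroup_mul_eq_of_mul_conjTranspose_eq {m n 𝕜 : Type*}
    [Fintype m] [Fintype n] [DecidableEq n] [RCLike 𝕜] {A B : Matrix m n 𝕜}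
    (h : A * Aᴴ = B * Bᴴ) : ∃ U ∈ unitaryGroup n 𝕜, A * U = B := by
  obtain ⟨T, hT⟩ := exists_linearIsometry_apply_eq_of_inner_eq (𝕜 := 𝕜)
    (x := fun i => WithLp.toLp 2 (A i)) (y := fun i => WithLp.toLp 2 (B i)) fun i j => by
      simpa [EuclideanSpace.inner_toLp_toLp, Matrix.mul_apply, dotProduct, mul_comm]
        using congr_fun (congr_fun h j) i
  let b := (EuclideanSpace.basisFun n 𝕜).toBasis
  let M := LinearMap.toMatrix b b T.toLinearMap
  have hM : M ∈ unitaryGroup n 𝕜 :=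
    (T.toLinearIsometryEquiv rfl).toMatrix_mem_unitaryGroup _ _
  -- `A` acts on the right, so the matrix of `T` enters transposed.
  refine ⟨Mᵀ, transpose_mem_unitaryGroup_iff.2 hM, ?_⟩
  ext i k
  have hTA := congr_fun (LinearMap.toMatrix_mulVec_repr b b T.toLinearMap (WithLp.toLp 2 (A i))) k
  simp only [b, OrthonormalBasis.coe_toBasis_repr_apply, EuclideanSpace.basisFun_repr] at hTA
  simpa [Matrix.mul_apply, mulVec, dotProduct, mul_comm, hT] using hTA

open scoped Matrix.Norms.L2Operator in
theorem Matrix.norm_eq_one_of_mem_spectrum_of_mem_unitaryGroup {n : Type*} [Fintype n]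
    [DecidableEq n] {U : Matrix n n ℂ} (hU : U ∈ unitaryGroup n ℂ) {μ : ℂ}
    (hμ : μ ∈ spectrum ℂ U) : ‖μ‖ = 1 :=
  spectrum.norm_eq_one_of_unitary hU hμ

open Complex in
theorem Complex.exists_mem_Ico_eq_exp_of_norm_eq_one {μ : ℂ} (hμ : ‖μ‖ = 1) :
    ∃ f : ℝ, f ∈ Set.Ico (0 : ℝ) 1 ∧ μ = exp (2 * Real.pi * I * f) := by
  set θ := toIcoMod Real.two_pi_pos 0 μ.arg with hθdef
  have hθ : θ ∈ Set.Ico 0 (2 * Real.pi) := by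
    simpa using toIcoMod_mem_Ico Real.two_pi_pos 0 μ.arg
  refine ⟨θ / (2 * Real.pi), ⟨by positivity [hθ.1], (div_lt_one Real.two_pi_pos).2 hθ.2⟩, ?_⟩
  have hexp : exp (θ * I) = exp (μ.arg * I) := by
    rw [hθdef, ← self_sub_toIcoDiv_zsmul, zsmul_eq_mul]
    push_cast
    exact exp_mul_I_periodic.sub_int_mul_eq _
  calc μ = exp (μ.arg * I) := by simpa [hμ] using (norm_mul_exp_arg_mul_I μ).symm
    _ = exp (2 * Real.pi * I * ↑(θ / (2 * Real.pi))) := by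
      rw [← hexp]; congr 1; push_cast; field_simp

theorem blockToeplitz_factor_shift_unitary_general (q t r : ℕ)
    (S : Matrix (Fin q × Fin t) (Fin q × Fin t) ℂ)
    (hbt : ∀ (a b a' b' : Fin q) (i j : Fin t),
      ((a.val : ℤ) - (b.val : ℤ) = (a'.val : ℤ) - (b'.val : ℤ)) →
      S (a, i) (b, j) = S (a', i) (b', j))
    (C : Matrix (Fin q × Fin t) (Fin r) ℂ)
    (hfact : S = C * Cᴴ) :
    ∃ U : Matrix (Fin r) (Fin r) ℂ,
      U ∈ Matrix.unitaryGroup (Fin r) ℂ ∧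
      (∀ (a : Fin q) (ha : a.val + 1 < q) (i : Fin t) (k : Fin r),
        (∑ l, C (a, i) l * U l k) = C (⟨a.val + 1, ha⟩, i) k) ∧
      (∀ μ ∈ spectrum ℂ U, ∃ f : ℝ, f ∈ Set.Ico (0 : ℝ) 1 ∧
        μ = Complex.exp (2 * Real.pi * Complex.I * (f : ℂ))) := by
  let shift (u : {u : Fin q × Fin t // u.1.val + 1 < q}) : Fin q × Fin t :=
    (⟨u.1.1.val + 1, u.2⟩, u.1.2)
  have hgram : C.submatrix Subtype.val id * (C.submatrix Subtype.val id)ᴴ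
      = C.submatrix shift id * (C.submatrix shift id)ᴴ := by
    simp only [conjTranspose_submatrix, ← submatrix_mul _ _ _ _ _ Function.bijective_id, ← hfact]
    ext u v
    exact hbt _ _ _ _ _ _ (by push_cast; ring)
  obtain ⟨U, hU, hshift⟩ := exists_mem_unitaryGroup_mul_eq_of_mul_conjTranspose_eq hgram
  exact ⟨U, hU, fun a ha i k => congr_fun (congr_fun hshift ⟨(a, i), ha⟩) k,
    fun μ hμ => Complex.exists_mem_Ico_eq_exp_of_norm_eq_one
      (norm_eq_one_of_mem_spectrum_of_mem_unitaryGroup hU hμ)⟩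

/-- Shift structure of a factorization of a PSD block Toeplitz matrix: the block rows of
a rank factorization are related by a unitary matrix whose eigenvalues are unimodular,
i.e. of the form `e^{2πi f}` with `f ∈ [0,1)`. -/
theorem blockToeplitz_factor_shift_unitary (q t r : ℕ) (hq : 2 ≤ q)
    (S : Matrix (Fin q × Fin t) (Fin q × Fin t) ℂ)
    (hpsd : S.PosSemidef)
    (hbt : ∀ (a b a' b' : Fin q) (i j : Fin t),
      ((a.val : ℤ) - (b.val : ℤ) = (a'.val : ℤ) - (b'.val : ℤ)) →
      S (a, i) (b, j) = S (a', i) (b', j))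
    (hrank : S.rank = r)
    (C : Matrix (Fin q × Fin t) (Fin r) ℂ)
    (hfact : S = C * Cᴴ) :
    ∃ U : Matrix (Fin r) (Fin r) ℂ,
      U ∈ Matrix.unitaryGroup (Fin r) ℂ ∧
      (∀ (a : Fin q) (ha : a.val + 1 < q) (i : Fin t) (k : Fin r),
        (∑ l, C (a, i) l * U l k) = C (⟨a.val + 1, ha⟩, i) k) ∧
      (∀ μ ∈ spectrum ℂ U, ∃ f : ℝ, f ∈ Set.Ico (0 : ℝ) 1 ∧
        μ = Complex.exp (2 * Real.pi * Complex.I * (f : ℂ))) :=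
  blockToeplitz_factor_shift_unitary_general q t r S hbt C hfact
end
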